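/- arXiv:2603.08105 — 11 statements merged into one kernel-verified Lean document; each statement's English description precedes it below -/
import Mathlib

section
/- Let U ⊆ ℝ² be open (coordinates (x₁, x₃)), I an open interval, and let u, w, v, θ, Π : U × I → ℝ be continuously differentiable. Let f, s, c_p, g, θ₀ be real constants with f, g, θ₀ ≠ 0, let Π₀ ∈ ℝ, and let D_t = ∂_t + u ∂₁ + w ∂₃. Define T : U × I → ℝ² by T = (x₁ + f⁻¹ v, (g/(θ₀ f²)) θ). If the momentum equation D_t v + f u = s c_p (Π − Π₀) and the temperature equation D_t θ + s v = 0 hold on U × I, then D_t T = (s g/(f θ₀)) · ( (c_p θ₀ / g)(Π − Π₀), (x − T)·e₁ ), where (x − T)·e₁ = x₁ − T₁; that is, D_t T₁ = (s c_p / f)(Π − Π₀) and D_t T₂ = (s g/(f θ₀))(x₁ − T₁). -/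
/-- For the geostrophic coordinate transformation `T = (x₁ + f⁻¹v, (g/(θ₀f²))θ)`,
the momentum equation `D_t v + f u = s c_p (Π − Π₀)` and the temperature equation
`D_t θ + s v = 0` imply `D_t T₁ = (s c_p / f)(Π − Π₀)` and
`D_t T₂ = (s g/(f θ₀))(x₁ − T₁)`. -/
theorem stmt_4
    (U : Set (ℝ × ℝ)) (hU : IsOpen U) (a b : ℝ)
    (u w v θ Pr : ℝ → ℝ → ℝ → ℝ)
    (f s c_p g θ₀ : ℝ) (hf : f ≠ 0) (hg : g ≠ 0) (hθ₀ : θ₀ ≠ 0) (Pr₀ : ℝ)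
    (hu : ContDiffOn ℝ 1 (fun p : (ℝ × ℝ) × ℝ => u p.1.1 p.1.2 p.2) (U ×ˢ Set.Ioo a b))
    (hw : ContDiffOn ℝ 1 (fun p : (ℝ × ℝ) × ℝ => w p.1.1 p.1.2 p.2) (U ×ˢ Set.Ioo a b))
    (hv : ContDiffOn ℝ 1 (fun p : (ℝ × ℝ) × ℝ => v p.1.1 p.1.2 p.2) (U ×ˢ Set.Ioo a b))
    (hθ : ContDiffOn ℝ 1 (fun p : (ℝ × ℝ) × ℝ => θ p.1.1 p.1.2 p.2) (U ×ˢ Set.Ioo a b))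
    (hPr : ContDiffOn ℝ 1 (fun p : (ℝ × ℝ) × ℝ => Pr p.1.1 p.1.2 p.2) (U ×ˢ Set.Ioo a b))
    (T₁ T₂ : ℝ → ℝ → ℝ → ℝ)
    (hT₁ : ∀ x₁ x₃ t : ℝ, T₁ x₁ x₃ t = x₁ + f⁻¹ * v x₁ x₃ t)
    (hT₂ : ∀ x₁ x₃ t : ℝ, T₂ x₁ x₃ t = g / (θ₀ * f ^ 2) * θ x₁ x₃ t)
    (hmom : ∀ x₁ x₃ t, (x₁, x₃) ∈ U → t ∈ Set.Ioo a b →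
      (deriv (fun τ => v x₁ x₃ τ) t
        + u x₁ x₃ t * deriv (fun y => v y x₃ t) x₁
        + w x₁ x₃ t * deriv (fun y => v x₁ y t) x₃)
        + f * u x₁ x₃ t = s * c_p * (Pr x₁ x₃ t - Pr₀))
    (htemp : ∀ x₁ x₃ t, (x₁, x₃) ∈ U → t ∈ Set.Ioo a b →
      (deriv (fun τ => θ x₁ x₃ τ) t
        + u x₁ x₃ t * deriv (fun y => θ y x₃ t) x₁
        + w x₁ x₃ t * deriv (fun y => θ x₁ y t) x₃)
        + s * v x₁ x₃ t = 0) :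
    ∀ x₁ x₃ t, (x₁, x₃) ∈ U → t ∈ Set.Ioo a b →
      (deriv (fun τ => T₁ x₁ x₃ τ) t
        + u x₁ x₃ t * deriv (fun y => T₁ y x₃ t) x₁
        + w x₁ x₃ t * deriv (fun y => T₁ x₁ y t) x₃
        = s * g / (f * θ₀) * (c_p * θ₀ / g * (Pr x₁ x₃ t - Pr₀)))
      ∧
      (deriv (fun τ => T₂ x₁ x₃ τ) t
        + u x₁ x₃ t * deriv (fun y => T₂ y x₃ t) x₁
        + w x₁ x₃ t * deriv (fun y => T₂ x₁ y t) x₃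
        = s * g / (f * θ₀) * (x₁ - T₁ x₁ x₃ t)) := by

  intro x₁ x₃ t hx ht
  have hopen : IsOpen (U ×ˢ Set.Ioo a b) := hU.prod isOpen_Ioo
  have hmem : ((x₁, x₃), t) ∈ U ×ˢ Set.Ioo a b := ⟨hx, ht⟩
  have hvD : DifferentiableAt ℝ (fun p : (ℝ × ℝ) × ℝ => v p.1.1 p.1.2 p.2) ((x₁, x₃), t) :=
    (hv.contDiffAt (hopen.mem_nhds hmem)).differentiableAt one_ne_zero
  have hθD : DifferentiableAt ℝ (fun p : (ℝ × ℝ) × ℝ => θ p.1.1 p.1.2 p.2) ((x₁, x₃), t) :=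
    (hθ.contDiffAt (hopen.mem_nhds hmem)).differentiableAt one_ne_zero
  have s1 : DifferentiableAt ℝ (fun y : ℝ => ((y, x₃), t)) x₁ := by fun_prop
  have s2 : DifferentiableAt ℝ (fun y : ℝ => ((x₁, y), t)) x₃ := by fun_prop
  have s3 : DifferentiableAt ℝ (fun τ : ℝ => ((x₁, x₃), τ)) t := by fun_prop
  have hv1 : DifferentiableAt ℝ (fun y => v y x₃ t) x₁ := (hvD.comp x₁ s1 :)
  have hv2 : DifferentiableAt ℝ (fun y => v x₁ y t) x₃ := (hvD.comp x₃ s2 :)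
  have hv3 : DifferentiableAt ℝ (fun τ => v x₁ x₃ τ) t := (hvD.comp t s3 :)
  have hθ1 : DifferentiableAt ℝ (fun y => θ y x₃ t) x₁ := (hθD.comp x₁ s1 :)
  have hθ2 : DifferentiableAt ℝ (fun y => θ x₁ y t) x₃ := (hθD.comp x₃ s2 :)
  have hθ3 : DifferentiableAt ℝ (fun τ => θ x₁ x₃ τ) t := (hθD.comp t s3 :)
  have hm := hmom x₁ x₃ t hx ht
  have hte := htemp x₁ x₃ t hx ht
  constructor
  · have d1 : deriv (fun τ => T₁ x₁ x₃ τ) t = f⁻¹ * deriv (fun τ => v x₁ x₃ τ) t := by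
      simp only [hT₁]
      rw [deriv_const_add, deriv_const_mul_field]
    have d2 : deriv (fun y => T₁ y x₃ t) x₁ = 1 + f⁻¹ * deriv (fun y => v y x₃ t) x₁ := by
      simp only [hT₁]
      rw [deriv_fun_add differentiableAt_fun_id (hv1.const_mul _), deriv_id'',
        deriv_const_mul_field]
    have d3 : deriv (fun y => T₁ x₁ y t) x₃ = f⁻¹ * deriv (fun y => v x₁ y t) x₃ := by
      simp only [hT₁]
      rw [deriv_const_add, deriv_const_mul_field]
    rw [d1, d2, d3]
    field_simp
    linear_combination hm
  · have c := g / (θ₀ * f ^ 2)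
    have d1 : deriv (fun τ => T₂ x₁ x₃ τ) t
        = g / (θ₀ * f ^ 2) * deriv (fun τ => θ x₁ x₃ τ) t := by
      simp only [hT₂]; rw [deriv_const_mul_field]
    have d2 : deriv (fun y => T₂ y x₃ t) x₁
        = g / (θ₀ * f ^ 2) * deriv (fun y => θ y x₃ t) x₁ := by
      simp only [hT₂]; rw [deriv_const_mul_field]
    have d3 : deriv (fun y => T₂ x₁ y t) x₃
        = g / (θ₀ * f ^ 2) * deriv (fun y => θ x₁ y t) x₃ := by
      simp only [hT₂]; rw [deriv_const_mul_field]
    rw [d1, d2, d3, hT₁]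
    field_simp
    linear_combination hte
end

section
/- Let f, g, c_p > 0 and Π₀ ∈ ℝ, and let c(x, y) = (f²/(2y₂))(x₁ − y₁)² + g x₂/y₂ − c_p Π₀ for x ∈ ℝ² and y ∈ ℝ² with y₂ > 0. For fixed y with y₂ > 0, let Φ(x; y) = ((y₂/f²) x₁ + y₁, (y₂²/g)(x₂ − x₁²/(2f²))). Then for any y, z ∈ ℝ² with y₂ > 0 and z₂ > 0, the function u : ℝ² → ℝ defined by u(x) = c(Φ(x; y), y) − c(Φ(x; y), z) is affine: there exist a ∈ ℝ² and b ∈ ℝ such that u(x) = ⟨a, x⟩ + b for all x ∈ ℝ². In particular u is convex, so the 2D compressible semi-geostrophic cost function satisfies Loeper's condition. -/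
/-!
Composing the cost with the c-exponential chart of `y` kills the quadratic term: for every `w`,
the `x₁²` contribution `y₂² x₁² / (2 f² w₂)` of the squared horizontal displacement is exactly
cancelled by the `−x₁² / (2 f²)` in the vertical coordinate of `Φ(x; y)`. Hence
`x ↦ c(Φ(x; y), w)` is affine for each `w`, and so is the difference `u`; affine functions are
convex.
-/

def IsPlaneAffine (u : ℝ × ℝ → ℝ) : Prop :=
  ∃ (a : ℝ × ℝ) (b : ℝ), ∀ x : ℝ × ℝ, u x = a.1 * x.1 + a.2 * x.2 + b

namespace IsPlaneAffine

variable {u v : ℝ × ℝ → ℝ}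

theorem sub (hu : IsPlaneAffine u) (hv : IsPlaneAffine v) : IsPlaneAffine (u - v) := by
  obtain ⟨a, b, hab⟩ := hu
  obtain ⟨a', b', hab'⟩ := hv
  refine ⟨a - a', b - b', fun x => ?_⟩
  simp only [Pi.sub_apply, hab, hab', Prod.fst_sub, Prod.snd_sub]
  ring

theorem convexOn (hu : IsPlaneAffine u) : ConvexOn ℝ Set.univ u := by
  obtain ⟨a, b, hab⟩ := hu
  have hu : u = ⇑(a.1 • LinearMap.fst ℝ ℝ ℝ + a.2 • LinearMap.snd ℝ ℝ ℝ) + fun _ => b :=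
    funext fun x => by simp [hab]
  rw [hu]
  exact (LinearMap.convexOn _ convex_univ).add (convexOn_const b convex_univ)

end IsPlaneAffine

/-- The semi-geostrophic cost, with `K = c_p Π₀`. -/
noncomputable def sgCost (f g K : ℝ) (x y : ℝ × ℝ) : ℝ :=
  f ^ 2 / (2 * y.2) * (x.1 - y.1) ^ 2 + g * x.2 / y.2 - K

/-- The c-exponential chart `Φ(x; y)` of `sgCost`. -/
noncomputable def sgExp (f g : ℝ) (x y : ℝ × ℝ) : ℝ × ℝ :=
  (y.2 / f ^ 2 * x.1 + y.1, y.2 ^ 2 / g * (x.2 - x.1 ^ 2 / (2 * f ^ 2)))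

theorem sgCost_sgExp {f g : ℝ} (hf : f ≠ 0) (hg : g ≠ 0) (K : ℝ) (x y w : ℝ × ℝ) :
    sgCost f g K (sgExp f g x y) w =
      y.2 * (y.1 - w.1) / w.2 * x.1 + y.2 ^ 2 / w.2 * x.2
        + (f ^ 2 * (y.1 - w.1) ^ 2 / (2 * w.2) - K) := by
  simp only [sgCost, sgExp]
  field_simp
  ring

theorem isPlaneAffine_sgCost_sgExp {f g : ℝ} (hf : f ≠ 0) (hg : g ≠ 0) (K : ℝ) (y w : ℝ × ℝ) :
    IsPlaneAffine fun x => sgCost f g K (sgExp f g x y) w :=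
  ⟨(y.2 * (y.1 - w.1) / w.2, y.2 ^ 2 / w.2), f ^ 2 * (y.1 - w.1) ^ 2 / (2 * w.2) - K,
    fun x => sgCost_sgExp hf hg K x y w⟩

theorem stmt_5_general
    (f g c_p Pr₀ : ℝ) (hf : 0 < f) (hg : 0 < g)
    (c : (ℝ × ℝ) → (ℝ × ℝ) → ℝ)
    (hc : ∀ x y : ℝ × ℝ,
      c x y = f ^ 2 / (2 * y.2) * (x.1 - y.1) ^ 2 + g * x.2 / y.2 - c_p * Pr₀)
    (Φ : (ℝ × ℝ) → (ℝ × ℝ) → ℝ × ℝ)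
    (hΦ : ∀ x y : ℝ × ℝ,
      Φ x y = (y.2 / f ^ 2 * x.1 + y.1, y.2 ^ 2 / g * (x.2 - x.1 ^ 2 / (2 * f ^ 2))))
    (y z : ℝ × ℝ)
    (u : ℝ × ℝ → ℝ) (hu : ∀ x : ℝ × ℝ, u x = c (Φ x y) y - c (Φ x y) z) :
    (∃ (a : ℝ × ℝ) (b : ℝ), ∀ x : ℝ × ℝ, u x = a.1 * x.1 + a.2 * x.2 + b)
      ∧ ConvexOn ℝ Set.univ u := by
  obtain rfl : c = sgCost f g (c_p * Pr₀) := funext₂ hc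
  obtain rfl : Φ = sgExp f g := funext₂ hΦ
  have hu_affine : IsPlaneAffine u := by
    rw [show u = _ from funext hu]
    exact (isPlaneAffine_sgCost_sgExp hf.ne' hg.ne' _ y y).sub
      (isPlaneAffine_sgCost_sgExp hf.ne' hg.ne' _ y z)
  exact ⟨hu_affine, hu_affine.convexOn⟩

/-- Loeper's condition for the 2D compressible semi-geostrophic cost: for any
`y, z` with positive second coordinates, the function
`u(x) = c(Φ(x;y), y) − c(Φ(x;y), z)` is affine, and in particular convex. -/
theorem stmt_5
    (f g c_p Pr₀ : ℝ) (hf : 0 < f) (hg : 0 < g) (hcp : 0 < c_p)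
    (c : (ℝ × ℝ) → (ℝ × ℝ) → ℝ)
    (hc : ∀ x y : ℝ × ℝ,
      c x y = f ^ 2 / (2 * y.2) * (x.1 - y.1) ^ 2 + g * x.2 / y.2 - c_p * Pr₀)
    (Φ : (ℝ × ℝ) → (ℝ × ℝ) → ℝ × ℝ)
    (hΦ : ∀ x y : ℝ × ℝ,
      Φ x y = (y.2 / f ^ 2 * x.1 + y.1, y.2 ^ 2 / g * (x.2 - x.1 ^ 2 / (2 * f ^ 2))))
    (y z : ℝ × ℝ) (hy : 0 < y.2) (hz : 0 < z.2)
    (u : ℝ × ℝ → ℝ) (hu : ∀ x : ℝ × ℝ, u x = c (Φ x y) y - c (Φ x y) z) :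
    (∃ (a : ℝ × ℝ) (b : ℝ), ∀ x : ℝ × ℝ, u x = a.1 * x.1 + a.2 * x.2 + b)
      ∧ ConvexOn ℝ Set.univ u :=
  stmt_5_general f g c_p Pr₀ hf hg c hc Φ hΦ y z u hu
end

section
/- Let f, g, c_p > 0 and Π₀ ∈ ℝ, and let c(x, y) = (f²/(2y₂))(x₁ − y₁)² + g x₂/y₂ − c_p Π₀ for x ∈ ℝ² and y ∈ ℝ² with y₂ > 0, and let Φ(x; y) = ((y₂/f²) x₁ + y₁, (y₂²/g)(x₂ − x₁²/(2f²))). Then for every y, z ∈ ℝ² with y₂ > 0, z₂ > 0, and every x ∈ ℝ², c(Φ(x; y), z) = (f²/(2z₂))(y₁ − z₁)² + (y₂²/z₂) x₂ + (y₂ x₁ / z₂)(y₁ − z₁) − c_p Π₀; in particular, as a function of x it is affine. -/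
/-! Along the `c`-exponential map the `x₁²` contribution of the kinetic term
`f²/(2z₂) (Φ₁ − z₁)²` is exactly cancelled by the one of the potential term `g Φ₂ / z₂`,
so what is left is affine in `x`. -/

theorem sgCost_expMap_eq {f g : ℝ} (hf : f ≠ 0) (hg : g ≠ 0) (x₁ x₂ y₁ y₂ z₁ z₂ : ℝ) :
    f ^ 2 / (2 * z₂) * (y₂ / f ^ 2 * x₁ + y₁ - z₁) ^ 2
        + g * (y₂ ^ 2 / g * (x₂ - x₁ ^ 2 / (2 * f ^ 2))) / z₂
      = f ^ 2 / (2 * z₂) * (y₁ - z₁) ^ 2 + y₂ ^ 2 / z₂ * x₂ + y₂ * x₁ / z₂ * (y₁ - z₁) := by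
  rcases eq_or_ne z₂ 0 with rfl | hz
  · simp
  · field_simp
    ring

theorem stmt_7_general
    (f g c_p Pr₀ : ℝ) (hf : 0 < f) (hg : 0 < g)
    (c : (ℝ × ℝ) → (ℝ × ℝ) → ℝ)
    (hc : ∀ x y : ℝ × ℝ,
      c x y = f ^ 2 / (2 * y.2) * (x.1 - y.1) ^ 2 + g * x.2 / y.2 - c_p * Pr₀)
    (Φ : (ℝ × ℝ) → (ℝ × ℝ) → ℝ × ℝ)
    (hΦ : ∀ x y : ℝ × ℝ,
      Φ x y = (y.2 / f ^ 2 * x.1 + y.1, y.2 ^ 2 / g * (x.2 - x.1 ^ 2 / (2 * f ^ 2)))) :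
    ∀ y z : ℝ × ℝ, 0 < y.2 → 0 < z.2 →
      (∀ x : ℝ × ℝ,
        c (Φ x y) z
          = f ^ 2 / (2 * z.2) * (y.1 - z.1) ^ 2 + y.2 ^ 2 / z.2 * x.2
            + y.2 * x.1 / z.2 * (y.1 - z.1) - c_p * Pr₀)
      ∧ (∃ (a : ℝ × ℝ) (b : ℝ), ∀ x : ℝ × ℝ,
          c (Φ x y) z = a.1 * x.1 + a.2 * x.2 + b) := by
  intro y z _ _
  have hcost : ∀ x : ℝ × ℝ, c (Φ x y) z
      = f ^ 2 / (2 * z.2) * (y.1 - z.1) ^ 2 + y.2 ^ 2 / z.2 * x.2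
        + y.2 * x.1 / z.2 * (y.1 - z.1) - c_p * Pr₀ := fun x => by
    rw [hΦ, hc, ← sgCost_expMap_eq hf.ne' hg.ne']
  refine ⟨hcost, (y.2 / z.2 * (y.1 - z.1), y.2 ^ 2 / z.2),
    f ^ 2 / (2 * z.2) * (y.1 - z.1) ^ 2 - c_p * Pr₀, fun x => ?_⟩
  rw [hcost]
  ring

/-- For the 2D compressible semi-geostrophic cost `c` and the `c`-exponential map
`Φ(·;y)`, one has the explicit formula
`c(Φ(x;y), z) = (f²/(2z₂))(y₁ − z₁)² + (y₂²/z₂) x₂ + (y₂ x₁ / z₂)(y₁ − z₁) − c_p Π₀`,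
which is affine in `x`. -/
theorem stmt_7
    (f g c_p Pr₀ : ℝ) (hf : 0 < f) (hg : 0 < g) (hcp : 0 < c_p)
    (c : (ℝ × ℝ) → (ℝ × ℝ) → ℝ)
    (hc : ∀ x y : ℝ × ℝ,
      c x y = f ^ 2 / (2 * y.2) * (x.1 - y.1) ^ 2 + g * x.2 / y.2 - c_p * Pr₀)
    (Φ : (ℝ × ℝ) → (ℝ × ℝ) → ℝ × ℝ)
    (hΦ : ∀ x y : ℝ × ℝ,
      Φ x y = (y.2 / f ^ 2 * x.1 + y.1, y.2 ^ 2 / g * (x.2 - x.1 ^ 2 / (2 * f ^ 2)))) :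
    ∀ y z : ℝ × ℝ, 0 < y.2 → 0 < z.2 →
      (∀ x : ℝ × ℝ,
        c (Φ x y) z
          = f ^ 2 / (2 * z.2) * (y.1 - z.1) ^ 2 + y.2 ^ 2 / z.2 * x.2
            + y.2 * x.1 / z.2 * (y.1 - z.1) - c_p * Pr₀)
      ∧ (∃ (a : ℝ × ℝ) (b : ℝ), ∀ x : ℝ × ℝ,
          c (Φ x y) z = a.1 * x.1 + a.2 * x.2 + b) :=
  stmt_7_general f g c_p Pr₀ hf hg c hc Φ hΦ
end

section
/- Let f, g, c_p > 0 and Π₀ ∈ ℝ, and let c(x, y) = (f²/(2y₂))(x₁ − y₁)² + g x₂/y₂ − c_p Π₀ for x ∈ ℝ² and y ∈ ℝ² with y₂ > 0. Fix y ∈ ℝ² with y₂ > 0 and define Φ(·; y) : ℝ² → ℝ² by Φ(p; y) = ((y₂/f²) p₁ + y₁, (y₂²/g)(p₂ − p₁²/(2f²))). Then (i) Φ(·; y) is a bijection of ℝ² onto ℝ², and (ii) for every p ∈ ℝ², −∇_y c(Φ(p; y), y) = p, where ∇_y denotes the gradient of c(x, y) with respect to its second argument; i.e., Φ(·; y) is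 the inverse of the map x ↦ −D_y c(x, y). -/
/-!
`Φ(·;y)` is a triangular map: its first coordinate is an affine function of `p₁` and its second
is `p₂` shifted by a function of `p₁` and rescaled, so it is inverted coordinate by coordinate.
Since `c(x, y) = (f²(x₁ − y₁)²/2 + g x₂)/y₂ − c_p Π₀`, one has
`−∂_{y₁} c = f²(x₁ − y₁)/y₂` and `−∂_{y₂} c = (f²(x₁ − y₁)²/2 + g x₂)/y₂²`, and substituting
`x = Φ(p;y)` returns `p`.
-/

lemma bijective_triangular {a b u : ℝ} (ha : a ≠ 0) (hb : b ≠ 0) (h : ℝ → ℝ) :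
    Function.Bijective fun p : ℝ × ℝ => (a * p.1 + u, b * (p.2 - h p.1)) := by
  rw [Function.bijective_iff_has_inverse]
  refine ⟨fun q => ((q.1 - u) / a, q.2 / b + h ((q.1 - u) / a)), ?_, ?_⟩
  · rintro ⟨p₁, p₂⟩
    simp only [Prod.mk.injEq]
    constructor
    · field_simp; ring
    · rw [add_sub_cancel_right, mul_div_cancel_left₀ _ ha, mul_div_cancel_left₀ _ hb]; ring
  · rintro ⟨q₁, q₂⟩
    ext <;> field_simp <;> ring

noncomputable def semigeostrophicCost (f g κ : ℝ) (x y : ℝ × ℝ) : ℝ :=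
  f ^ 2 / (2 * y.2) * (x.1 - y.1) ^ 2 + g * x.2 / y.2 - κ

lemma hasDerivAt_semigeostrophicCost_fst (f g κ : ℝ) (x : ℝ × ℝ) (r s : ℝ) :
    HasDerivAt (fun t => semigeostrophicCost f g κ x (t, s)) (-(f ^ 2 / s * (x.1 - r))) r := by
  show HasDerivAt (fun t => f ^ 2 / (2 * s) * (x.1 - t) ^ 2 + g * x.2 / s - κ) _ r
  refine (((((hasDerivAt_id r).const_sub x.1).pow 2).const_mul (f ^ 2 / (2 * s))).add_const
    (g * x.2 / s) |>.sub_const κ).congr_deriv ?_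
  simp only [id]
  ring

lemma hasDerivAt_semigeostrophicCost_snd (f g κ : ℝ) (x : ℝ × ℝ) (r : ℝ) {s : ℝ} (hs : s ≠ 0) :
    HasDerivAt (fun t => semigeostrophicCost f g κ x (r, t))
      (-((f ^ 2 / 2 * (x.1 - r) ^ 2 + g * x.2) / s ^ 2)) s := by
  have hform : (fun t => semigeostrophicCost f g κ x (r, t)) =
      fun t => (f ^ 2 / 2 * (x.1 - r) ^ 2 + g * x.2) * t⁻¹ - κ := by
    funext t
    simp only [semigeostrophicCost]
    ring
  rw [hform]
  refine (((hasDerivAt_inv hs).const_mul (f ^ 2 / 2 * (x.1 - r) ^ 2 + g * x.2)).sub_const κ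
    ).congr_deriv ?_
  ring

theorem stmt_8_general
    (f g c_p Pr₀ : ℝ) (hf : 0 < f) (hg : 0 < g)
    (c : (ℝ × ℝ) → (ℝ × ℝ) → ℝ)
    (hc : ∀ x y : ℝ × ℝ,
      c x y = f ^ 2 / (2 * y.2) * (x.1 - y.1) ^ 2 + g * x.2 / y.2 - c_p * Pr₀)
    (y : ℝ × ℝ) (hy : 0 < y.2)
    (Φ : (ℝ × ℝ) → ℝ × ℝ)
    (hΦ : ∀ p : ℝ × ℝ,
      Φ p = (y.2 / f ^ 2 * p.1 + y.1, y.2 ^ 2 / g * (p.2 - p.1 ^ 2 / (2 * f ^ 2)))) :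
    Function.Bijective Φ ∧
    ∀ p : ℝ × ℝ,
      (-(deriv (fun t => c (Φ p) (t, y.2)) y.1),
       -(deriv (fun t => c (Φ p) (y.1, t)) y.2)) = p := by
  obtain rfl : c = semigeostrophicCost f g (c_p * Pr₀) := funext fun x => funext (hc x)
  obtain rfl : Φ = _ := funext hΦ
  refine ⟨bijective_triangular (by positivity) (by positivity) fun s => s ^ 2 / (2 * f ^ 2),
    fun p => ?_⟩
  rw [(hasDerivAt_semigeostrophicCost_fst ..).deriv,
    (hasDerivAt_semigeostrophicCost_snd _ _ _ _ _ hy.ne').deriv]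
  ext <;> field_simp <;> ring

/-- The `c`-exponential map `Φ(·;y)` is a bijection of `ℝ²` and is the inverse of
`x ↦ −D_y c(x, y)`: for every `p`, `−∇_y c(Φ(p;y), y) = p`, where the gradient is
taken with respect to the second argument of `c`. -/
theorem stmt_8
    (f g c_p Pr₀ : ℝ) (hf : 0 < f) (hg : 0 < g) (hcp : 0 < c_p)
    (c : (ℝ × ℝ) → (ℝ × ℝ) → ℝ)
    (hc : ∀ x y : ℝ × ℝ,
      c x y = f ^ 2 / (2 * y.2) * (x.1 - y.1) ^ 2 + g * x.2 / y.2 - c_p * Pr₀)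
    (y : ℝ × ℝ) (hy : 0 < y.2)
    (Φ : (ℝ × ℝ) → ℝ × ℝ)
    (hΦ : ∀ p : ℝ × ℝ,
      Φ p = (y.2 / f ^ 2 * p.1 + y.1, y.2 ^ 2 / g * (p.2 - p.1 ^ 2 / (2 * f ^ 2)))) :
    Function.Bijective Φ ∧
    ∀ p : ℝ × ℝ,
      (-(deriv (fun t => c (Φ p) (t, y.2)) y.1),
       -(deriv (fun t => c (Φ p) (y.1, t)) y.2)) = p :=
  stmt_8_general f g c_p Pr₀ hf hg c hc y hy Φ hΦ
end

section
/- Let f, g, c_p > 0 and Π₀ ∈ ℝ, and let c(x, y) = (f²/(2y₂))(x₁ − y₁)² + g x₂/y₂ − c_p Π₀ for x ∈ ℝ² and y ∈ ℝ² with y₂ > 0, and let Φ(x; y) = ((y₂/f²) x₁ + y₁, (y₂²/g)(x₂ − x₁²/(2f²))). Let N ≥ 1, let z¹, …, z^N ∈ ℝ² with z₂^i > 0 for all i, let w ∈ ℝ^N, let X ⊆ ℝ² be any set, and define the c-Laguerre cells L^i = { x ∈ X : c(x, z^i) − w^i ≤ c(x, z^j) − w^j for all j ∈ {1, …, N} }.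 Fix y ∈ ℝ² with y₂ > 0 and suppose the chart preimage Φ(·;y)⁻¹(X) of the domain is convex. Then for each i, the chart preimage Φ(·; y)⁻¹(L^i) = { p ∈ ℝ² : Φ(p; y) ∈ L^i } is a convex subset of ℝ², being an intersection of Φ(·;y)⁻¹(X) with finitely many half-planes. -/
/-!
In the chart `p ↦ Φ(p; y)` the semi-geostrophic cost `c(·, ζ)` becomes affine in `p`: the
quadratic term `y₂² p₁² / (2 f² ζ₂)` coming from `(x₁ - ζ₁)²` is cancelled exactly by the
`-x₁² / (2 f²)` correction in the second chart coordinate. Hence every inequality defining a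
Laguerre cell pulls back to a half-plane, and the cell pulls back to the convex preimage of `X`
cut by finitely many half-planes.
-/

theorem convex_sep_forall_le_affineMap {𝕜 E ι : Type*} [Ring 𝕜] [PartialOrder 𝕜]
    [IsOrderedRing 𝕜] [AddCommGroup E] [Module 𝕜 E] {s : Set E} (hs : Convex 𝕜 s)
    (F : ι → E →ᵃ[𝕜] 𝕜) (i : ι) : Convex 𝕜 {x ∈ s | ∀ j, F i x ≤ F j x} := by
  have hcell : {x ∈ s | ∀ j, F i x ≤ F j x} = s ∩ ⋂ j, (F j - F i) ⁻¹' Set.Ici 0 := by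
    ext x
    simp [sub_nonneg]
  rw [hcell]
  exact hs.inter (convex_iInter fun j => (convex_Ici 0).affine_preimage _)

theorem exists_affineMap_prod_eq (α β k : ℝ) :
    ∃ F : ℝ × ℝ →ᵃ[ℝ] ℝ, ∀ p, F p = α * p.1 + β * p.2 + k :=
  ⟨(α • LinearMap.fst ℝ ℝ ℝ + β • LinearMap.snd ℝ ℝ ℝ).toAffineMap +
      AffineMap.const ℝ (ℝ × ℝ) k, fun p => by simp⟩

theorem sgCost_expChart_eq_affine {f g : ℝ} (hf : f ≠ 0) (hg : g ≠ 0) (K : ℝ)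
    (p y ζ : ℝ × ℝ) :
    f ^ 2 / (2 * ζ.2) * (y.2 / f ^ 2 * p.1 + y.1 - ζ.1) ^ 2
      + g * (y.2 ^ 2 / g * (p.2 - p.1 ^ 2 / (2 * f ^ 2))) / ζ.2 - K
    = ζ.2⁻¹ * (y.2 * (y.1 - ζ.1) * p.1 + y.2 ^ 2 * p.2 + f ^ 2 / 2 * (y.1 - ζ.1) ^ 2) - K := by
  simp only [div_eq_mul_inv, mul_inv]
  field_simp
  ring

theorem stmt_9_general
    (f g c_p Pr₀ : ℝ) (hf : 0 < f) (hg : 0 < g)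
    (c : (ℝ × ℝ) → (ℝ × ℝ) → ℝ)
    (hc : ∀ x y : ℝ × ℝ,
      c x y = f ^ 2 / (2 * y.2) * (x.1 - y.1) ^ 2 + g * x.2 / y.2 - c_p * Pr₀)
    (Φ : (ℝ × ℝ) → (ℝ × ℝ) → ℝ × ℝ)
    (hΦ : ∀ x y : ℝ × ℝ,
      Φ x y = (y.2 / f ^ 2 * x.1 + y.1, y.2 ^ 2 / g * (x.2 - x.1 ^ 2 / (2 * f ^ 2))))
    (N : ℕ)
    (z : Fin N → ℝ × ℝ)
    (w : Fin N → ℝ)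
    (X : Set (ℝ × ℝ))
    (L : Fin N → Set (ℝ × ℝ))
    (hL : ∀ i, L i = {x ∈ X | ∀ j, c x (z i) - w i ≤ c x (z j) - w j})
    (y : ℝ × ℝ)
    (hXconv : Convex ℝ ((fun p => Φ p y) ⁻¹' X)) :
    ∀ i, Convex ℝ ((fun p => Φ p y) ⁻¹' L i) := by
  have hcost : ∀ j, ∃ F : ℝ × ℝ →ᵃ[ℝ] ℝ, ∀ p, F p = c (Φ p y) (z j) - w j := by
    intro j
    obtain ⟨F, hF⟩ := exists_affineMap_prod_eq ((z j).2⁻¹ * (y.2 * (y.1 - (z j).1)))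
      ((z j).2⁻¹ * y.2 ^ 2) ((z j).2⁻¹ * (f ^ 2 / 2 * (y.1 - (z j).1) ^ 2) - c_p * Pr₀ - w j)
    refine ⟨F, fun p => ?_⟩
    rw [hF, hc, hΦ, sgCost_expChart_eq_affine hf.ne' hg.ne']
    ring
  choose F hF using hcost
  intro i
  have hcell : (fun p => Φ p y) ⁻¹' L i = {p ∈ (fun p => Φ p y) ⁻¹' X | ∀ j, F i p ≤ F j p} := by
    ext p
    simp only [Set.mem_preimage, hL, Set.mem_ofPred_eq, hF]
  rw [hcell]
  exact convex_sep_forall_le_affineMap hXconv F i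

/-- In the `c`-exponential chart at `y`, each `c`-Laguerre cell has convex
preimage: if the chart preimage of the domain `X` is convex, then for each `i` the
chart preimage of the cell `L^i` is a convex subset of `ℝ²`. -/
theorem stmt_9
    (f g c_p Pr₀ : ℝ) (hf : 0 < f) (hg : 0 < g) (hcp : 0 < c_p)
    (c : (ℝ × ℝ) → (ℝ × ℝ) → ℝ)
    (hc : ∀ x y : ℝ × ℝ,
      c x y = f ^ 2 / (2 * y.2) * (x.1 - y.1) ^ 2 + g * x.2 / y.2 - c_p * Pr₀)
    (Φ : (ℝ × ℝ) → (ℝ × ℝ) → ℝ × ℝ)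
    (hΦ : ∀ x y : ℝ × ℝ,
      Φ x y = (y.2 / f ^ 2 * x.1 + y.1, y.2 ^ 2 / g * (x.2 - x.1 ^ 2 / (2 * f ^ 2))))
    (N : ℕ) (hN : 1 ≤ N)
    (z : Fin N → ℝ × ℝ) (hz : ∀ i, 0 < (z i).2)
    (w : Fin N → ℝ)
    (X : Set (ℝ × ℝ))
    (L : Fin N → Set (ℝ × ℝ))
    (hL : ∀ i, L i = {x ∈ X | ∀ j, c x (z i) - w i ≤ c x (z j) - w j})
    (y : ℝ × ℝ) (hy : 0 < y.2)
    (hXconv : Convex ℝ ((fun p => Φ p y) ⁻¹' X)) :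
    ∀ i, Convex ℝ ((fun p => Φ p y) ⁻¹' L i) :=
  stmt_9_general f g c_p Pr₀ hf hg c hc Φ hΦ N z w X L hL y hXconv
end

section
/- Let f, g, c_p > 0 and Π₀ ∈ ℝ, let c(x, y) = (f²/(2y₂))(x₁ − y₁)² + g x₂/y₂ − c_p Π₀ for x ∈ ℝ², y₂ > 0, and let Φ(p) = (p₁/f², (1/g)(p₂ − p₁²/(2f²))) be the c-exponential chart at y = (0, 1). For a seed z ∈ ℝ² with z₂ > 0 and weight w ∈ ℝ, define y* = (z₁/(2z₂), −1/(2z₂)) ∈ ℝ² and ψ = w + (z₁/(2z₂))² + (1/(2z₂))² − (f²/(2z₂)) z₁² + c_p Π₀. Then for all p ∈ ℝ², c(Φ(p), z) − w = ‖p − y*‖² − ‖p‖² − ψ. Consequently, for two seeds z^i, z^j with associated (y*^i, ψ^i), (y*^j, ψ^j): c(Φ(p), z^i) − w^i − c(Φ(p), z^j) + w^j = ‖p − y*^i‖² − ψ^i − ‖p − y*^j‖² + ψ^j for all p ∈ ℝ². -/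
/-!
Pulled back through the chart `Φ`, the cost `c(·, z)` becomes an affine function of `p`,
namely `(p₂ − z₁ p₁)/z₂ + f² z₁²/(2z₂) − c_p Π₀`: the quadratic terms in `p₁` coming from
`(x₁ − z₁)²` and from `x₂` cancel. An affine function of `p` is `‖p − y*‖² − ‖p‖²` up to a
constant, once `y*` is chosen so that `−2⟨p, y*⟩` has the right linear part; the constant is `ψ`.
-/

noncomputable section

namespace SemiGeostrophic

/-- The compressible semi-geostrophic cost, with `c₀` standing for `c_p Π₀`. -/
def cost (f g c₀ : ℝ) (x y : ℝ × ℝ) : ℝ :=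
  f ^ 2 / (2 * y.2) * (x.1 - y.1) ^ 2 + g * x.2 / y.2 - c₀

def chart (f g : ℝ) (p : ℝ × ℝ) : ℝ × ℝ :=
  (p.1 / f ^ 2, 1 / g * (p.2 - p.1 ^ 2 / (2 * f ^ 2)))

def powerSite (z : ℝ × ℝ) : ℝ × ℝ :=
  (z.1 / (2 * z.2), -(1 / (2 * z.2)))

def powerWeight (f c₀ : ℝ) (z : ℝ × ℝ) (w : ℝ) : ℝ :=
  w + (z.1 / (2 * z.2)) ^ 2 + (1 / (2 * z.2)) ^ 2 - f ^ 2 / (2 * z.2) * z.1 ^ 2 + c₀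

theorem cost_chart {f g : ℝ} (hf : f ≠ 0) (hg : g ≠ 0) (c₀ : ℝ) {z : ℝ × ℝ} (hz : z.2 ≠ 0)
    (p : ℝ × ℝ) :
    cost f g c₀ (chart f g p) z = (p.2 - z.1 * p.1) / z.2 + f ^ 2 * z.1 ^ 2 / (2 * z.2) - c₀ := by
  simp only [cost, chart]
  field_simp
  ring

theorem dist_powerSite_sq_sub_norm_sq (z p : ℝ × ℝ) :
    (p.1 - (powerSite z).1) ^ 2 + (p.2 - (powerSite z).2) ^ 2 - (p.1 ^ 2 + p.2 ^ 2)
      = (p.2 - z.1 * p.1) / z.2 + (z.1 / (2 * z.2)) ^ 2 + (1 / (2 * z.2)) ^ 2 := by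
  simp only [powerSite]
  ring

theorem cost_chart_sub {f g : ℝ} (hf : f ≠ 0) (hg : g ≠ 0) (c₀ : ℝ) {z : ℝ × ℝ} (hz : z.2 ≠ 0)
    (w : ℝ) (p : ℝ × ℝ) :
    cost f g c₀ (chart f g p) z - w
      = (p.1 - (powerSite z).1) ^ 2 + (p.2 - (powerSite z).2) ^ 2 - (p.1 ^ 2 + p.2 ^ 2)
        - powerWeight f c₀ z w := by
  rw [cost_chart hf hg c₀ hz, dist_powerSite_sq_sub_norm_sq, powerWeight]
  ring

end SemiGeostrophic

end

open SemiGeostrophic in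
theorem stmt_10_general
    (f g c_p Pr₀ : ℝ) (hf : 0 < f) (hg : 0 < g)
    (c : (ℝ × ℝ) → (ℝ × ℝ) → ℝ)
    (hc : ∀ x y : ℝ × ℝ,
      c x y = f ^ 2 / (2 * y.2) * (x.1 - y.1) ^ 2 + g * x.2 / y.2 - c_p * Pr₀)
    (Φ : (ℝ × ℝ) → ℝ × ℝ)
    (hΦ : ∀ p : ℝ × ℝ,
      Φ p = (p.1 / f ^ 2, 1 / g * (p.2 - p.1 ^ 2 / (2 * f ^ 2))))
    (ystar : (ℝ × ℝ) → ℝ × ℝ)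
    (hystar : ∀ z : ℝ × ℝ, ystar z = (z.1 / (2 * z.2), -(1 / (2 * z.2))))
    (ψ : (ℝ × ℝ) → ℝ → ℝ)
    (hψ : ∀ (z : ℝ × ℝ) (w : ℝ),
      ψ z w = w + (z.1 / (2 * z.2)) ^ 2 + (1 / (2 * z.2)) ^ 2
        - f ^ 2 / (2 * z.2) * z.1 ^ 2 + c_p * Pr₀) :
    (∀ z : ℝ × ℝ, 0 < z.2 → ∀ w : ℝ, ∀ p : ℝ × ℝ,
      c (Φ p) z - w
        = ((p.1 - (ystar z).1) ^ 2 + (p.2 - (ystar z).2) ^ 2)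
          - (p.1 ^ 2 + p.2 ^ 2) - ψ z w) ∧
    (∀ zi zj : ℝ × ℝ, 0 < zi.2 → 0 < zj.2 → ∀ wi wj : ℝ, ∀ p : ℝ × ℝ,
      c (Φ p) zi - wi - c (Φ p) zj + wj
        = ((p.1 - (ystar zi).1) ^ 2 + (p.2 - (ystar zi).2) ^ 2) - ψ zi wi
          - ((p.1 - (ystar zj).1) ^ 2 + (p.2 - (ystar zj).2) ^ 2) + ψ zj wj) := by
  obtain rfl : c = cost f g (c_p * Pr₀) := funext fun x => funext (hc x)
  obtain rfl : Φ = chart f g := funext hΦ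
  obtain rfl : ystar = powerSite := funext hystar
  obtain rfl : ψ = powerWeight f (c_p * Pr₀) := funext fun z => funext (hψ z)
  have key := fun (z : ℝ × ℝ) (hz : 0 < z.2) => cost_chart_sub hf.ne' hg.ne' (c_p * Pr₀) hz.ne'
  refine ⟨key, fun zi zj hi hj wi wj p => ?_⟩
  linarith [key zi hi wi p, key zj hj wj p]

/-- In the `c`-exponential chart at `y = (0,1)`, the cost becomes a shifted
quadratic: `c(Φ(p), z) − w = ‖p − y*‖² − ‖p‖² − ψ` with `y* = (z₁/(2z₂), −1/(2z₂))`
and `ψ = w + (z₁/(2z₂))² + (1/(2z₂))² − (f²/(2z₂))z₁² + c_p Π₀`; consequently the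
pairwise cell-boundary functions are differences of squared distances. -/
theorem stmt_10
    (f g c_p Pr₀ : ℝ) (hf : 0 < f) (hg : 0 < g) (hcp : 0 < c_p)
    (c : (ℝ × ℝ) → (ℝ × ℝ) → ℝ)
    (hc : ∀ x y : ℝ × ℝ,
      c x y = f ^ 2 / (2 * y.2) * (x.1 - y.1) ^ 2 + g * x.2 / y.2 - c_p * Pr₀)
    (Φ : (ℝ × ℝ) → ℝ × ℝ)
    (hΦ : ∀ p : ℝ × ℝ,
      Φ p = (p.1 / f ^ 2, 1 / g * (p.2 - p.1 ^ 2 / (2 * f ^ 2))))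
    (ystar : (ℝ × ℝ) → ℝ × ℝ)
    (hystar : ∀ z : ℝ × ℝ, ystar z = (z.1 / (2 * z.2), -(1 / (2 * z.2))))
    (ψ : (ℝ × ℝ) → ℝ → ℝ)
    (hψ : ∀ (z : ℝ × ℝ) (w : ℝ),
      ψ z w = w + (z.1 / (2 * z.2)) ^ 2 + (1 / (2 * z.2)) ^ 2
        - f ^ 2 / (2 * z.2) * z.1 ^ 2 + c_p * Pr₀) :
    (∀ z : ℝ × ℝ, 0 < z.2 → ∀ w : ℝ, ∀ p : ℝ × ℝ,
      c (Φ p) z - w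
        = ((p.1 - (ystar z).1) ^ 2 + (p.2 - (ystar z).2) ^ 2)
          - (p.1 ^ 2 + p.2 ^ 2) - ψ z w) ∧
    (∀ zi zj : ℝ × ℝ, 0 < zi.2 → 0 < zj.2 → ∀ wi wj : ℝ, ∀ p : ℝ × ℝ,
      c (Φ p) zi - wi - c (Φ p) zj + wj
        = ((p.1 - (ystar zi).1) ^ 2 + (p.2 - (ystar zi).2) ^ 2) - ψ zi wi
          - ((p.1 - (ystar zj).1) ^ 2 + (p.2 - (ystar zj).2) ^ 2) + ψ zj wj) :=
  stmt_10_general f g c_p Pr₀ hf hg c hc Φ hΦ ystar hystar ψ hψ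
end

section
/- In the single-seed benchmark, let z = (z₁, z₂) with z₂ ≥ 5/3, let c(x, z) = (1/z₂)((x₁ − z₁)²/2 + x₂) − 1, and let w* = (4 − 3z₂)/(6z₂). Then (i) w* − c(x, z) ≥ 0 for all x ∈ [z₁ − 1, z₁ + 1] × [0, 1], and (ii) ∫_{z₁−1}^{z₁+1} ∫_0^1 (w* − c(x, z)) dx₂ dx₁ = 1. Hence w* solves the single-seed mass constraint 1 = ∫ (f*)'(w − c(x, z)) dx with (f*)'(t) = max(t, 0). -/
open intervalIntegral

/-- Single-seed benchmark, branch `z₂ ≥ 5/3`: with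
`c(x,z) = (1/z₂)((x₁−z₁)²/2 + x₂) − 1` and `w* = (4 − 3z₂)/(6z₂)`, the quantity
`w* − c` is nonnegative on the periodic cell `[z₁−1, z₁+1] × [0,1]` and integrates
to `1`; hence `w*` solves the mass constraint `1 = ∫ max(w* − c, 0)`. -/
theorem stmt_12
    (z₁ z₂ : ℝ) (hz₂ : 5 / 3 ≤ z₂)
    (c : ℝ × ℝ → ℝ)
    (hc : ∀ x : ℝ × ℝ, c x = 1 / z₂ * ((x.1 - z₁) ^ 2 / 2 + x.2) - 1)
    (wstar : ℝ) (hw : wstar = (4 - 3 * z₂) / (6 * z₂)) :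
    (∀ x : ℝ × ℝ, x.1 ∈ Set.Icc (z₁ - 1) (z₁ + 1) → x.2 ∈ Set.Icc (0:ℝ) 1 →
      0 ≤ wstar - c x) ∧
    (∫ x₁ in (z₁ - 1)..(z₁ + 1), ∫ x₂ in (0:ℝ)..1, (wstar - c (x₁, x₂))) = 1 ∧
    (∫ x₁ in (z₁ - 1)..(z₁ + 1), ∫ x₂ in (0:ℝ)..1, max (wstar - c (x₁, x₂)) 0) = 1 := by
  have hz2pos : (0:ℝ) < z₂ := by linarith
  -- nonnegativity
  have hnn : ∀ x : ℝ × ℝ, x.1 ∈ Set.Icc (z₁ - 1) (z₁ + 1) → x.2 ∈ Set.Icc (0:ℝ) 1 →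
      0 ≤ wstar - c x := by
    intro x hx1 hx2
    rw [hc, hw]
    obtain ⟨h1, h2⟩ := hx1
    obtain ⟨h3, h4⟩ := hx2
    have hsq : (x.1 - z₁) ^ 2 ≤ 1 := by nlinarith
    have key : (4 - 3 * z₂) / (6 * z₂) - (1 / z₂ * ((x.1 - z₁) ^ 2 / 2 + x.2) - 1)
        = ((4 + 3 * z₂) - (3 * (x.1 - z₁) ^ 2 + 6 * x.2)) / (6 * z₂) := by
      field_simp; ring
    rw [key]
    apply div_nonneg _ (by linarith)
    nlinarith
  -- inner integral
  have hinner : ∀ x₁ : ℝ, (∫ x₂ in (0:ℝ)..1, (wstar - c (x₁, x₂)))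
      = (wstar + 1 - (x₁ - z₁) ^ 2 / (2 * z₂)) - 1 / (2 * z₂) := by
    intro x₁
    have : (fun x₂ : ℝ => wstar - c (x₁, x₂))
        = fun x₂ => (wstar + 1 - (x₁ - z₁) ^ 2 / (2 * z₂)) - (1 / z₂) * x₂ := by
      funext x₂; rw [hc]; field_simp; ring
    rw [this, intervalIntegral.integral_sub (intervalIntegrable_const)
      ((intervalIntegrable_id).const_mul _), intervalIntegral.integral_const,
      intervalIntegral.integral_const_mul, integral_id]
    simp only [smul_eq_mul]
    field_simp [hz2pos.ne']
    ring
  -- outer integral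
  have houter : (∫ x₁ in (z₁ - 1)..(z₁ + 1),
      ((wstar + 1 - (x₁ - z₁) ^ 2 / (2 * z₂)) - 1 / (2 * z₂))) = 1 := by
    have h1 : (fun x₁ : ℝ => (wstar + 1 - (x₁ - z₁) ^ 2 / (2 * z₂)) - 1 / (2 * z₂))
        = fun x₁ => (wstar + 1 - 1 / (2 * z₂)) - (1 / (2 * z₂)) * (x₁ - z₁) ^ 2 := by
      funext x₁; ring
    rw [h1, intervalIntegral.integral_sub (intervalIntegrable_const)]
    · rw [intervalIntegral.integral_const, intervalIntegral.integral_const_mul]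
      have h2 : (∫ x₁ in (z₁ - 1)..(z₁ + 1), (x₁ - z₁) ^ 2) = 2 / 3 := by
        have := intervalIntegral.integral_comp_sub_right (a := z₁ - 1) (b := z₁ + 1)
          (fun x => x ^ 2) z₁
        simp only [show z₁ - 1 - z₁ = -1 by ring, show z₁ + 1 - z₁ = 1 by ring] at this
        rw [this, integral_pow]
        norm_num
      rw [h2, hw]
      simp only [smul_eq_mul]
      field_simp [hz2pos.ne']
      ring
    · exact (Continuous.intervalIntegrable (by fun_prop) _ _)
  have hmain : (∫ x₁ in (z₁ - 1)..(z₁ + 1), ∫ x₂ in (0:ℝ)..1, (wstar - c (x₁, x₂))) = 1 := by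
    rw [show (fun x₁ => ∫ x₂ in (0:ℝ)..1, (wstar - c (x₁, x₂)))
      = fun x₁ => (wstar + 1 - (x₁ - z₁) ^ 2 / (2 * z₂)) - 1 / (2 * z₂)
      from funext hinner]
    exact houter
  refine ⟨hnn, hmain, ?_⟩
  have hcongr : (∫ x₁ in (z₁ - 1)..(z₁ + 1), ∫ x₂ in (0:ℝ)..1, max (wstar - c (x₁, x₂)) 0)
      = ∫ x₁ in (z₁ - 1)..(z₁ + 1), ∫ x₂ in (0:ℝ)..1, (wstar - c (x₁, x₂)) := by
    apply intervalIntegral.integral_congr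
    intro x₁ hx₁
    rw [Set.uIcc_of_le (by linarith)] at hx₁
    apply intervalIntegral.integral_congr
    intro x₂ hx₂
    rw [Set.uIcc_of_le (by norm_num)] at hx₂
    exact max_eq_left (hnn (x₁, x₂) hx₁ hx₂)
  rw [hcongr]; exact hmain
end

section
/- In the single-seed benchmark, let z = (z₁, z₂) with 2/15 ≤ z₂ ≤ 43/60, let c(x, z) = (1/z₂)((x₁ − z₁)²/2 + x₂) − 1, and let w* = (1 − 6z₂ + 6√(z₂ − 1/45))/(6z₂). Then ∫_{z₁−1}^{z₁+1} ∫_0^1 max(w* − c(x, z), 0) dx₂ dx₁ = 1; i.e., w* solves the single-seed mass constraint 1 = ∫ (f*)'(w − c(x, z)) dx with (f*)'(t) = max(t, 0). -/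
open intervalIntegral

lemma inner_int (z₂ B : ℝ) (hz : 0 < z₂) (hB0 : 0 ≤ B) (hB1 : B ≤ 1) :
    ∫ x in (0:ℝ)..1, max ((B - x) / z₂) 0 = B ^ 2 / (2 * z₂) := by
  have hcont : Continuous fun x : ℝ => max ((B - x) / z₂) 0 := by
    fun_prop
  have h1 : IntervalIntegrable (fun x : ℝ => max ((B - x) / z₂) 0) MeasureTheory.volume 0 B :=
    hcont.intervalIntegrable _ _
  have h2 : IntervalIntegrable (fun x : ℝ => max ((B - x) / z₂) 0) MeasureTheory.volume B 1 :=
    hcont.intervalIntegrable _ _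
  rw [← intervalIntegral.integral_add_adjacent_intervals h1 h2]
  have e1 : (∫ x in (0:ℝ)..B, max ((B - x) / z₂) 0) = ∫ x in (0:ℝ)..B, (B - x) / z₂ := by
    apply intervalIntegral.integral_congr
    intro x hx
    rw [Set.uIcc_of_le hB0] at hx
    have : x ≤ B := hx.2
    exact max_eq_left (div_nonneg (by linarith) hz.le)
  have e2 : (∫ x in B..(1:ℝ), max ((B - x) / z₂) 0) = 0 := by
    have : (∫ x in B..(1:ℝ), max ((B - x) / z₂) 0) = ∫ x in B..(1:ℝ), (0:ℝ) := by
      apply intervalIntegral.integral_congr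
      intro x hx
      rw [Set.uIcc_of_le hB1] at hx
      have hx' : B ≤ x := hx.1
      have : (B - x) / z₂ ≤ 0 := div_nonpos_of_nonpos_of_nonneg (by linarith) hz.le
      exact max_eq_right this
    simpa using this
  rw [e1, e2]
  have : (∫ x in (0:ℝ)..B, (B - x) / z₂) = ∫ x in (0:ℝ)..B, (B - x) * (1 / z₂) := by
    apply intervalIntegral.integral_congr; intro x _; ring
  rw [this, intervalIntegral.integral_mul_const, intervalIntegral.integral_sub
    intervalIntegrable_const intervalIntegrable_id,
    intervalIntegral.integral_const, integral_id]
  field_simp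
  ring

/-- Single-seed benchmark, branch `2/15 ≤ z₂ ≤ 43/60`: with
`c(x,z) = (1/z₂)((x₁−z₁)²/2 + x₂) − 1` and
`w* = (1 − 6z₂ + 6√(z₂ − 1/45))/(6z₂)`, the weight `w*` solves the single-seed mass
constraint `1 = ∫ max(w* − c, 0)` over the periodic cell `[z₁−1, z₁+1] × [0,1]`. -/
theorem stmt_13
    (z₁ z₂ : ℝ) (hz₂l : 2 / 15 ≤ z₂) (hz₂u : z₂ ≤ 43 / 60)
    (c : ℝ × ℝ → ℝ)
    (hc : ∀ x : ℝ × ℝ, c x = 1 / z₂ * ((x.1 - z₁) ^ 2 / 2 + x.2) - 1)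
    (wstar : ℝ)
    (hw : wstar = (1 - 6 * z₂ + 6 * Real.sqrt (z₂ - 1 / 45)) / (6 * z₂)) :
    (∫ x₁ in (z₁ - 1)..(z₁ + 1), ∫ x₂ in (0:ℝ)..1, max (wstar - c (x₁, x₂)) 0) = 1 := by
  have hz : (0:ℝ) < z₂ := by linarith
  set s : ℝ := Real.sqrt (z₂ - 1 / 45) with hs
  have hs2 : s ^ 2 = z₂ - 1 / 45 := Real.sq_sqrt (by linarith)
  have hsl : (1:ℝ) / 3 ≤ s := by
    have : Real.sqrt (1/9) ≤ s := Real.sqrt_le_sqrt (by linarith)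
    rwa [show (1/9:ℝ) = (1/3)^2 by norm_num, Real.sqrt_sq (by norm_num)] at this
  have hsu : s ≤ 5 / 6 := by
    have : s ≤ Real.sqrt ((5/6)^2) := Real.sqrt_le_sqrt (by nlinarith)
    rwa [Real.sqrt_sq (by norm_num)] at this
  set A : ℝ := 1 / 6 + s with hA
  have hwA : z₂ * (wstar + 1) = A := by
    rw [hw, hA]
    field_simp
    ring
  -- rewrite inner integral
  have key : ∀ x₁ ∈ Set.uIcc (z₁ - 1) (z₁ + 1),
      (∫ x₂ in (0:ℝ)..1, max (wstar - c (x₁, x₂)) 0)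
        = (A - (x₁ - z₁) ^ 2 / 2) ^ 2 / (2 * z₂) := by
    intro x₁ hx₁
    rw [Set.uIcc_of_le (by linarith)] at hx₁
    have hxa : z₁ - 1 ≤ x₁ := hx₁.1
    have hxb : x₁ ≤ z₁ + 1 := hx₁.2
    have hsq : (x₁ - z₁) ^ 2 ≤ 1 := by nlinarith
    set B : ℝ := A - (x₁ - z₁) ^ 2 / 2 with hB
    have hB0 : 0 ≤ B := by rw [hB, hA]; nlinarith
    have hB1 : B ≤ 1 := by rw [hB, hA]; nlinarith
    have hpt : ∀ x₂ : ℝ, wstar - c (x₁, x₂) = (B - x₂) / z₂ := by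
      intro x₂
      rw [hc (x₁, x₂), hB, ← hwA]
      field_simp
      ring
    calc (∫ x₂ in (0:ℝ)..1, max (wstar - c (x₁, x₂)) 0)
        = ∫ x₂ in (0:ℝ)..1, max ((B - x₂) / z₂) 0 := by
          apply intervalIntegral.integral_congr; intro x₂ _; dsimp only; rw [hpt]
      _ = B ^ 2 / (2 * z₂) := inner_int z₂ B hz hB0 hB1
  rw [intervalIntegral.integral_congr key]
  have hcomp : (∫ x₁ in (z₁ - 1)..(z₁ + 1), (A - (x₁ - z₁) ^ 2 / 2) ^ 2 / (2 * z₂))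
      = ∫ u in (-1:ℝ)..1, (A - u ^ 2 / 2) ^ 2 / (2 * z₂) := by
    have := intervalIntegral.integral_comp_sub_right
      (a := z₁ - 1) (b := z₁ + 1) (fun u => (A - u ^ 2 / 2) ^ 2 / (2 * z₂)) z₁
    simpa using this
  rw [hcomp]
  have hF : ∀ u : ℝ, HasDerivAt (fun u : ℝ => (A ^ 2 * u - A * u ^ 3 / 3 + u ^ 5 / 20) / (2 * z₂))
      ((A - u ^ 2 / 2) ^ 2 / (2 * z₂)) u := by
    intro u
    have h := ((((hasDerivAt_id u).const_mul (A ^ 2)).sub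
      (((hasDerivAt_pow 3 u).const_mul A).div_const 3)).add
      ((hasDerivAt_pow 5 u).div_const 20)).div_const (2 * z₂)
    exact h.congr_deriv (by ring)
  rw [intervalIntegral.integral_eq_sub_of_hasDerivAt (fun u _ => hF u)
    ((by fun_prop : Continuous fun u : ℝ => (A - u ^ 2 / 2) ^ 2 / (2 * z₂)).intervalIntegrable _ _)]
  have hz' : z₂ ≠ 0 := ne_of_gt hz
  rw [hA]
  field_simp
  nlinarith [hs2]
end

section
/- In the single-seed benchmark, let z = (z₁, z₂) with z₂ ≥ 5/3, let c(x, z) = (1/z₂)((x₁ − z₁)²/2 + x₂) − 1, and let w* = (4 − 3z₂)/(6z₂). Then the internal energy E_I := ∫_{z₁−1}^{z₁+1} ∫_0^1 [ max(w* − c(x, z), 0) − max(w* − c(x, z), 0)² ] dx₂ dx₁ satisfies E_I = 1/2 − 19/(90 z₂²). -/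
open intervalIntegral

lemma hasDerivAt_cubic (b c d t : ℝ) :
    HasDerivAt (fun s : ℝ => b * s + c * s ^ 2 + d * s ^ 3)
      (b + 2 * c * t + 3 * d * t ^ 2) t := by
  have h : HasDerivAt (fun s : ℝ => s) 1 t := hasDerivAt_id t
  have h2 := (h.pow 2).const_mul c
  have h3 := (h.pow 3).const_mul d
  have h1 := h.const_mul b
  refine ((h1.add h2).add h3).congr_deriv ?_
  ring

lemma hasDerivAt_quintic (a1 a3 a5 z t : ℝ) :
    HasDerivAt (fun s : ℝ => a1 * (s - z) + a3 * (s - z) ^ 3 + a5 * (s - z) ^ 5)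
      (a1 + 3 * a3 * (t - z) ^ 2 + 5 * a5 * (t - z) ^ 4) t := by
  have h : HasDerivAt (fun s : ℝ => s - z) 1 t := (hasDerivAt_id t).sub_const z
  have h1 := h.const_mul a1
  have h3 := (h.pow 3).const_mul a3
  have h5 := (h.pow 5).const_mul a5
  refine ((h1.add h3).add h5).congr_deriv ?_
  ring

/-- Single-seed benchmark, branch `z₂ ≥ 5/3`: the internal energy
`E_I = ∫ [max(w* − c, 0) − max(w* − c, 0)²]` over the periodic cell
`[z₁−1, z₁+1] × [0,1]` equals `1/2 − 19/(90 z₂²)`. -/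
theorem stmt_14
    (z₁ z₂ : ℝ) (hz₂ : 5 / 3 ≤ z₂)
    (c : ℝ × ℝ → ℝ)
    (hc : ∀ x : ℝ × ℝ, c x = 1 / z₂ * ((x.1 - z₁) ^ 2 / 2 + x.2) - 1)
    (wstar : ℝ) (hw : wstar = (4 - 3 * z₂) / (6 * z₂)) :
    (∫ x₁ in (z₁ - 1)..(z₁ + 1), ∫ x₂ in (0:ℝ)..1,
        (max (wstar - c (x₁, x₂)) 0 - (max (wstar - c (x₁, x₂)) 0) ^ 2))
      = 1 / 2 - 19 / (90 * z₂ ^ 2) := by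
  have hz₂0 : (0:ℝ) < z₂ := by linarith
  have hz₂ne : z₂ ≠ 0 := ne_of_gt hz₂0
  simp only [hc]
  set W : ℝ := wstar + 1 with hW
  have hP : ∀ x₁ ∈ Set.uIcc (z₁ - 1) (z₁ + 1),
      (∫ x₂ in (0:ℝ)..1,
        (max (wstar - (1 / z₂ * (((x₁, x₂).1 - z₁) ^ 2 / 2 + (x₁, x₂).2) - 1)) 0
          - (max (wstar - (1 / z₂ * (((x₁, x₂).1 - z₁) ^ 2 / 2 + (x₁, x₂).2) - 1)) 0) ^ 2))
      = (W - (x₁ - z₁) ^ 2 / (2 * z₂)) - (W - (x₁ - z₁) ^ 2 / (2 * z₂)) ^ 2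
        + (2 * (W - (x₁ - z₁) ^ 2 / (2 * z₂)) - 1) / (2 * z₂) - 1 / (3 * z₂ ^ 2) := by
    intro x₁ hx₁
    have hx₁' : |x₁ - z₁| ≤ 1 := by
      rw [Set.uIcc_of_le (by linarith)] at hx₁
      rw [abs_le]; constructor <;> [linarith [hx₁.1]; linarith [hx₁.2]]
    have hq : (x₁ - z₁) ^ 2 ≤ 1 := by
      have := sq_abs (x₁ - z₁)
      nlinarith [abs_nonneg (x₁ - z₁)]
    set A : ℝ := W - (x₁ - z₁) ^ 2 / (2 * z₂) with hA
    refine (intervalIntegral.integral_eq_sub_of_hasDerivAt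
      (f := fun s : ℝ => (A - A ^ 2) * s + ((2 * A - 1) / (2 * z₂)) * s ^ 2
            + (-1 / (3 * z₂ ^ 2)) * s ^ 3)
      (f' := fun x₂ : ℝ => max (wstar - (1 / z₂ * ((x₁ - z₁) ^ 2 / 2 + x₂) - 1)) 0
          - (max (wstar - (1 / z₂ * ((x₁ - z₁) ^ 2 / 2 + x₂) - 1)) 0) ^ 2)
      ?_ ?_).trans ?_
    · intro t ht
      rw [Set.uIcc_of_le (by norm_num : (0:ℝ) ≤ 1)] at ht
      have hE : (0:ℝ) ≤ wstar - (1 / z₂ * ((x₁ - z₁) ^ 2 / 2 + t) - 1) := by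
        have h1 : wstar - (1 / z₂ * ((x₁ - z₁) ^ 2 / 2 + t) - 1)
            = ((4 + 3 * z₂) / 6 - (x₁ - z₁) ^ 2 / 2 - t) / z₂ := by
          rw [hw]; field_simp; ring
        rw [h1]
        apply div_nonneg _ hz₂0.le
        nlinarith [ht.1, ht.2, hq]
      simp only [max_eq_left hE]
      refine (hasDerivAt_cubic (A - A ^ 2) ((2 * A - 1) / (2 * z₂)) (-1 / (3 * z₂ ^ 2)) t).congr_deriv
        ?_
      rw [hA, hW]
      field_simp
      ring
    · apply Continuous.intervalIntegrable
      fun_prop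
    · beta_reduce
      ring
  rw [intervalIntegral.integral_congr hP]
  refine (intervalIntegral.integral_eq_sub_of_hasDerivAt
    (f := fun s : ℝ =>
        (W - W ^ 2 + (2 * W - 1) / (2 * z₂) - 1 / (3 * z₂ ^ 2)) * (s - z₁)
        + (((W - 1 / 2) / z₂ - 1 / (2 * z₂ ^ 2)) / 3) * (s - z₁) ^ 3
        + (-1 / (20 * z₂ ^ 2)) * (s - z₁) ^ 5)
    (f' := fun x₁ : ℝ =>
        (W - (x₁ - z₁) ^ 2 / (2 * z₂)) - (W - (x₁ - z₁) ^ 2 / (2 * z₂)) ^ 2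
        + (2 * (W - (x₁ - z₁) ^ 2 / (2 * z₂)) - 1) / (2 * z₂) - 1 / (3 * z₂ ^ 2))
    ?_ ?_).trans ?_
  · intro t ht
    refine (hasDerivAt_quintic
      (W - W ^ 2 + (2 * W - 1) / (2 * z₂) - 1 / (3 * z₂ ^ 2))
      (((W - 1 / 2) / z₂ - 1 / (2 * z₂ ^ 2)) / 3)
      (-1 / (20 * z₂ ^ 2)) z₁ t).congr_deriv ?_
    field_simp
    ring
  · apply Continuous.intervalIntegrable
    fun_prop
  · beta_reduce
    rw [hW, hw]
    field_simp
    ring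
end

section
/- In the single-seed benchmark, let z = (z₁, z₂) with 2/15 ≤ z₂ ≤ 43/60, let c(x, z) = (1/z₂)((x₁ − z₁)²/2 + x₂) − 1, and let w* = (1 − 6z₂ + 6√(z₂ − 1/45))/(6z₂). Then the internal energy E_I := ∫_{z₁−1}^{z₁+1} ∫_0^1 [ max(w* − c(x, z), 0) − max(w* − c(x, z), 0)² ] dx₂ dx₁ satisfies E_I = 1 − (630 z₂ √(225 z₂ − 5) + 28 √(225 z₂ − 5) − 20)/(14175 z₂²). -/
open intervalIntegral

set_option maxHeartbeats 2000000 in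
/-- Single-seed benchmark, branch `2/15 ≤ z₂ ≤ 43/60`: the internal energy
`E_I = ∫ [max(w* − c, 0) − max(w* − c, 0)²]` over the periodic cell
`[z₁−1, z₁+1] × [0,1]`, with `w* = (1 − 6z₂ + 6√(z₂ − 1/45))/(6z₂)`, equals
`1 − (630 z₂ √(225 z₂ − 5) + 28 √(225 z₂ − 5) − 20)/(14175 z₂²)`. -/
theorem stmt_15
    (z₁ z₂ : ℝ) (hz₂l : 2 / 15 ≤ z₂) (hz₂u : z₂ ≤ 43 / 60)
    (c : ℝ × ℝ → ℝ)
    (hc : ∀ x : ℝ × ℝ, c x = 1 / z₂ * ((x.1 - z₁) ^ 2 / 2 + x.2) - 1)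
    (wstar : ℝ)
    (hw : wstar = (1 - 6 * z₂ + 6 * Real.sqrt (z₂ - 1 / 45)) / (6 * z₂)) :
    (∫ x₁ in (z₁ - 1)..(z₁ + 1), ∫ x₂ in (0:ℝ)..1,
        (max (wstar - c (x₁, x₂)) 0 - (max (wstar - c (x₁, x₂)) 0) ^ 2))
      = 1 - (630 * z₂ * Real.sqrt (225 * z₂ - 5)
              + 28 * Real.sqrt (225 * z₂ - 5) - 20) / (14175 * z₂ ^ 2) := by
  have hz : 0 < z₂ := by linarith
  set S := Real.sqrt (z₂ - 1 / 45) with hSdef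
  have hS2 : S ^ 2 = z₂ - 1 / 45 := Real.sq_sqrt (by linarith)
  have hSnn : 0 ≤ S := Real.sqrt_nonneg _
  have hS3 : 1 / 3 ≤ S := by nlinarith
  have hS5 : S ≤ 5 / 6 := by nlinarith
  set B : ℝ := 1 / 6 + S with hB
  have hB1 : 1 / 2 ≤ B := by rw [hB]; linarith
  have hB2 : B ≤ 1 := by rw [hB]; linarith
  -- inner integral
  have inner : ∀ t : ℝ, 0 ≤ t → t ≤ 1 →
      (∫ x₂ in (0:ℝ)..1, (max ((t - x₂) / z₂) 0 - (max ((t - x₂) / z₂) 0) ^ 2))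
        = t ^ 2 / (2 * z₂) - t ^ 3 / (3 * z₂ ^ 2) := by
    intro t ht0 ht1
    have hcont : Continuous fun x₂ : ℝ =>
        (max ((t - x₂) / z₂) 0 - (max ((t - x₂) / z₂) 0) ^ 2) := by
      have h : Continuous fun x₂ : ℝ => max ((t - x₂) / z₂) 0 :=
        ((continuous_const.sub continuous_id).div_const z₂).max continuous_const
      exact h.sub (h.pow 2)
    rw [← intervalIntegral.integral_add_adjacent_intervals (a := (0:ℝ)) (b := t) (c := 1)
        (hcont.intervalIntegrable _ _) (hcont.intervalIntegrable _ _)]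
    have h2 : (∫ x₂ in t..(1:ℝ), (max ((t - x₂) / z₂) 0 - (max ((t - x₂) / z₂) 0) ^ 2)) = 0 := by
      have : (∫ x₂ in t..(1:ℝ), (max ((t - x₂) / z₂) 0 - (max ((t - x₂) / z₂) 0) ^ 2))
          = ∫ _x₂ in t..(1:ℝ), (0:ℝ) := by
        apply intervalIntegral.integral_congr
        intro x hx
        rw [Set.uIcc_of_le ht1] at hx
        have hm : max ((t - x) / z₂) 0 = 0 :=
          max_eq_right (div_nonpos_of_nonpos_of_nonneg (by linarith [hx.1]) hz.le)
        simp [hm]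
      rw [this, intervalIntegral.integral_zero]
    have h1 : (∫ x₂ in (0:ℝ)..t, (max ((t - x₂) / z₂) 0 - (max ((t - x₂) / z₂) 0) ^ 2))
        = t ^ 2 / (2 * z₂) - t ^ 3 / (3 * z₂ ^ 2) := by
      have hcg : (∫ x₂ in (0:ℝ)..t, (max ((t - x₂) / z₂) 0 - (max ((t - x₂) / z₂) 0) ^ 2))
          = ∫ x₂ in (0:ℝ)..t, ((t - x₂) / z₂ - ((t - x₂) / z₂) ^ 2) := by
        apply intervalIntegral.integral_congr
        intro x hx
        rw [Set.uIcc_of_le ht0] at hx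
        have hm : max ((t - x) / z₂) 0 = (t - x) / z₂ :=
          max_eq_left (div_nonneg (by linarith [hx.2]) hz.le)
        simp only [hm]
      rw [hcg]
      have hderiv : ∀ x ∈ Set.uIcc (0:ℝ) t,
          HasDerivAt (fun y => -((t - y) ^ 2 / (2 * z₂)) + (t - y) ^ 3 / (3 * z₂ ^ 2))
            ((t - x) / z₂ - ((t - x) / z₂) ^ 2) x := by
        intro x _
        have h0 : HasDerivAt (fun y : ℝ => t - y) (-1) x := (hasDerivAt_id x).const_sub t
        have hd : HasDerivAt (fun y => -((t - y) ^ 2 / (2 * z₂)) + (t - y) ^ 3 / (3 * z₂ ^ 2)) _ x :=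
          (((h0.pow 2).div_const (2 * z₂)).neg).add ((h0.pow 3).div_const (3 * z₂ ^ 2))
        convert hd using 1
        norm_num
        ring
      rw [intervalIntegral.integral_eq_sub_of_hasDerivAt hderiv
        (((((continuous_const.sub continuous_id).div_const z₂)).sub
          (((continuous_const.sub continuous_id).div_const z₂).pow 2)).intervalIntegrable _ _)]
      ring
    rw [h1, h2]; ring
  -- rewrite the integrand of the outer integral
  have key : ∀ a b : ℝ, wstar - c (a, b) = ((B - (a - z₁) ^ 2 / 2) - b) / z₂ := by
    intro a b
    rw [hc, hw, hB]
    field_simp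
    ring
  have houter : (∫ x₁ in (z₁ - 1)..(z₁ + 1), ∫ x₂ in (0:ℝ)..1,
        (max (wstar - c (x₁, x₂)) 0 - (max (wstar - c (x₁, x₂)) 0) ^ 2))
      = ∫ x₁ in (z₁ - 1)..(z₁ + 1),
          ((B - (x₁ - z₁) ^ 2 / 2) ^ 2 / (2 * z₂) - (B - (x₁ - z₁) ^ 2 / 2) ^ 3 / (3 * z₂ ^ 2)) := by
    apply intervalIntegral.integral_congr
    intro x₁ hx₁
    rw [Set.uIcc_of_le (by linarith : z₁ - 1 ≤ z₁ + 1)] at hx₁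
    have hx : (x₁ - z₁) ^ 2 ≤ 1 := by nlinarith [hx₁.1, hx₁.2]
    have hx0 : 0 ≤ (x₁ - z₁) ^ 2 := sq_nonneg _
    simp only [key]
    exact inner _ (by nlinarith) (by nlinarith)
  rw [houter]
  -- outer integral via FTC
  have hderiv : ∀ x ∈ Set.uIcc (z₁ - 1) (z₁ + 1),
      HasDerivAt (fun x : ℝ =>
          (B ^ 2 / (2 * z₂) - B ^ 3 / (3 * z₂ ^ 2)) * (x - z₁)
          + (-(B / (6 * z₂)) + B ^ 2 / (6 * z₂ ^ 2)) * (x - z₁) ^ 3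
          + (1 / (40 * z₂) - B / (20 * z₂ ^ 2)) * (x - z₁) ^ 5
          + (1 / (168 * z₂ ^ 2)) * (x - z₁) ^ 7)
        ((B - (x - z₁) ^ 2 / 2) ^ 2 / (2 * z₂) - (B - (x - z₁) ^ 2 / 2) ^ 3 / (3 * z₂ ^ 2)) x := by
    intro x _
    have h0 : HasDerivAt (fun x : ℝ => x - z₁) 1 x := (hasDerivAt_id x).sub_const z₁
    have hd : HasDerivAt (fun x : ℝ =>
          (B ^ 2 / (2 * z₂) - B ^ 3 / (3 * z₂ ^ 2)) * (x - z₁)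
          + (-(B / (6 * z₂)) + B ^ 2 / (6 * z₂ ^ 2)) * (x - z₁) ^ 3
          + (1 / (40 * z₂) - B / (20 * z₂ ^ 2)) * (x - z₁) ^ 5
          + (1 / (168 * z₂ ^ 2)) * (x - z₁) ^ 7) _ x := (((h0.const_mul (B ^ 2 / (2 * z₂) - B ^ 3 / (3 * z₂ ^ 2))).add
        ((h0.pow 3).const_mul (-(B / (6 * z₂)) + B ^ 2 / (6 * z₂ ^ 2)))).add
        ((h0.pow 5).const_mul (1 / (40 * z₂) - B / (20 * z₂ ^ 2)))).add
        ((h0.pow 7).const_mul (1 / (168 * z₂ ^ 2)))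
    convert hd using 1
    norm_num
    ring
  have hcontP : Continuous fun x : ℝ =>
      (B - (x - z₁) ^ 2 / 2) ^ 2 / (2 * z₂) - (B - (x - z₁) ^ 2 / 2) ^ 3 / (3 * z₂ ^ 2) := by
    have h : Continuous fun x : ℝ => B - (x - z₁) ^ 2 / 2 :=
      continuous_const.sub (((continuous_id.sub continuous_const).pow 2).div_const 2)
    exact ((h.pow 2).div_const _).sub ((h.pow 3).div_const _)
  rw [intervalIntegral.integral_eq_sub_of_hasDerivAt hderiv (hcontP.intervalIntegrable _ _)]
  -- final algebra
  have h15 : Real.sqrt (225 * z₂ - 5) = 15 * S := by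
    rw [show (225 * z₂ - 5 : ℝ) = (15 : ℝ) ^ 2 * (z₂ - 1 / 45) by ring,
      Real.sqrt_mul (by norm_num), ← hSdef, Real.sqrt_sq (by norm_num)]
  have hz₂eq : z₂ = S ^ 2 + 1 / 45 := by linarith
  have hden : S ^ 2 + 1 / 45 ≠ 0 := by positivity
  rw [h15, hB, hz₂eq]
  field_simp
  ring
end

section
/- Let f, g, c_p > 0, Π₀ ∈ ℝ, γ > 1, κ > 0. Let c(x, y) = (f²/(2y₂))(x₁ − y₁)² + g x₂/y₂ − c_p Π₀ for x ∈ ℝ², y₂ > 0, let Φ(p) = (p₁/f², (1/g)(p₂ − p₁²/(2f²))) be the c-exponential chart at y = (0,1), and let φ(t) = (t/(κγ))^{1/(γ−1)} for t > 0 (the derivative of the convex conjugate of f(s) = κ s^γ on positive arguments). Fix z ∈ ℝ² with z₂ > 0 and w ∈ ℝ, and let V = { p ∈ ℝ² : w − c(Φ(p), z) > 0 }. Then on V, ∂/∂p₂ [ −(z₂(γ−1)/(2γ−1)) (w − c(Φ(p), z)) φ(w − c(Φ(p), z))^γ ] = φ(w − c(Φ(p), z))^γ. -/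
/-- Internal-energy flux identity: with `φ(t) = (t/(κγ))^{1/(γ−1)}` for `t > 0`
(the derivative of the convex conjugate of `f(s) = κ s^γ`), on the set where
`w − c(Φ(p), z) > 0` one has
`∂/∂p₂ [ −(z₂(γ−1)/(2γ−1)) (w − c(Φ(p), z)) φ(w − c(Φ(p), z))^γ ]
  = φ(w − c(Φ(p), z))^γ`. -/
theorem stmt_19
    (f g c_p Pr₀ γ κ : ℝ) (hf : 0 < f) (hg : 0 < g) (hcp : 0 < c_p)
    (hγ : 1 < γ) (hκ : 0 < κ)
    (c : (ℝ × ℝ) → (ℝ × ℝ) → ℝ)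
    (hc : ∀ x y : ℝ × ℝ,
      c x y = f ^ 2 / (2 * y.2) * (x.1 - y.1) ^ 2 + g * x.2 / y.2 - c_p * Pr₀)
    (Φ : (ℝ × ℝ) → ℝ × ℝ)
    (hΦ : ∀ p : ℝ × ℝ,
      Φ p = (p.1 / f ^ 2, 1 / g * (p.2 - p.1 ^ 2 / (2 * f ^ 2))))
    (φ : ℝ → ℝ)
    (hφ : ∀ t : ℝ, 0 < t → φ t = (t / (κ * γ)) ^ (1 / (γ - 1)))
    (z : ℝ × ℝ) (hz : 0 < z.2) (w : ℝ) :
    ∀ p : ℝ × ℝ, 0 < w - c (Φ p) z →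
      deriv (fun t => -(z.2 * (γ - 1) / (2 * γ - 1))
          * (w - c (Φ (p.1, t)) z) * φ (w - c (Φ (p.1, t)) z) ^ γ) p.2
        = φ (w - c (Φ p) z) ^ γ := by
  intro p hp
  have hz' : z.2 ≠ 0 := hz.ne'
  have hγ1 : γ - 1 ≠ 0 := by linarith
  have hγ2 : (2 : ℝ) * γ - 1 ≠ 0 := by nlinarith
  have hf' : f ≠ 0 := hf.ne'
  have hg' : g ≠ 0 := hg.ne'
  have hm : (0:ℝ) < κ * γ := by positivity
  set u0 := w - c (Φ p) z with hu0
  set K := z.2 * (γ - 1) / (2 * γ - 1) with hK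
  set m := κ * γ with hmdef
  set r := (2 * γ - 1) / (γ - 1) with hr
  -- the inner quantity is affine in t
  have hu : ∀ t : ℝ, w - c (Φ (p.1, t)) z = u0 - (t - p.2) / z.2 := by
    intro t
    have h1 := hΦ p
    have h2 := hΦ (p.1, t)
    rw [hu0, hc, hc, h1, h2]
    field_simp
    ring
  set v : ℝ → ℝ := fun t => (u0 - (t - p.2) / z.2) / m with hv
  have hv0 : 0 < v p.2 := by
    simp only [hv, sub_self, zero_div, sub_zero]
    positivity
  have hcv : Continuous v := by
    apply Continuous.div_const
    exact (continuous_const.sub ((continuous_id.sub continuous_const).div_const _))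
  -- derivative of v
  have hdv : HasDerivAt v (-(1 / z.2) / m) p.2 := by
    have h1 : HasDerivAt (fun t : ℝ => t - p.2) 1 p.2 := (hasDerivAt_id p.2).sub_const p.2
    have h2 := ((h1.div_const z.2).const_sub u0).div_const m
    simpa using h2
  -- the explicit model function
  set H : ℝ → ℝ := fun t => -K * m * v t ^ r with hH
  have hdH : HasDerivAt H (-K * m * (-(1 / z.2) / m * r * v p.2 ^ (r - 1))) p.2 := by
    exact (hdv.rpow_const (Or.inl hv0.ne')).const_mul (-K * m)
  -- eventual equality with the given function
  have hev0 : ∀ᶠ t in nhds p.2, 0 < v t :=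
    hcv.continuousAt.eventually (eventually_gt_nhds hv0)
  have hev : (fun t => -K * (w - c (Φ (p.1, t)) z) * φ (w - c (Φ (p.1, t)) z) ^ γ)
      =ᶠ[nhds p.2] H := by
    filter_upwards [hev0] with t ht
    have hut : w - c (Φ (p.1, t)) z = m * v t := by
      rw [hu t, hv]; field_simp
    have hpos : 0 < w - c (Φ (p.1, t)) z := by rw [hut]; positivity
    have hφt : φ (w - c (Φ (p.1, t)) z) = v t ^ (1 / (γ - 1)) := by
      rw [hφ _ hpos, hut, mul_div_cancel_left₀ _ hm.ne']
    rw [hφt, hut, hH]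
    beta_reduce
    rw [← Real.rpow_mul ht.le]
    have hexp : 1 / (γ - 1) * γ = γ / (γ - 1) := by
      rw [div_mul_eq_mul_div, one_mul]
    have hr1 : r = 1 + γ / (γ - 1) := by rw [hr]; field_simp; ring
    rw [hexp, hr1, Real.rpow_add ht, Real.rpow_one]
    ring
  have hderiv := hev.deriv_eq
  rw [hderiv, hdH.deriv]
  -- compute the value
  have hφ0 : φ u0 = v p.2 ^ (1 / (γ - 1)) := by
    have : u0 = m * v p.2 := by
      rw [hv]; simp only [sub_self, zero_div, sub_zero]; field_simp
    rw [hφ _ hp, this, mul_div_cancel_left₀ _ hm.ne']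
  rw [hφ0, ← Real.rpow_mul hv0.le]
  have hexp : 1 / (γ - 1) * γ = r - 1 := by rw [hr]; field_simp; ring
  rw [hexp]
  have hKr : -K * m * (-(1 / z.2) / m * r) = 1 := by
    rw [hK, hr]; field_simp; exact div_self (by rw [mul_comm]; exact hγ2)
  calc -K * m * (-(1 / z.2) / m * r * v p.2 ^ (r - 1))
      = (-K * m * (-(1 / z.2) / m * r)) * v p.2 ^ (r - 1) := by ring
    _ = v p.2 ^ (r - 1) := by rw [hKr, one_mul]
end
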